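/- arXiv:2006.06587 — 2 statements merged into one kernel-verified Lean document; each statement's English description precedes it below -/
import Mathlib

section
/- With the notation of the knowledge-gain lower bound: G(C) − G(A) ≥ D/(Nγ), where D = (1 − γ/‖A‖₂²)·trace(AᵀA) − 2η·trace(AᵀB) + η²·trace(BᵀB). -/
open Matrix BigOperators

/-- Frobenius norm of a real matrix: `‖A‖_F = sqrt (trace (Aᵀ A))`. -/
noncomputable def frobNorm {m n : ℕ} (A : Matrix (Fin m) (Fin n) ℝ) : ℝ :=
  Real.sqrt ((Aᵀ * A).trace)

/-- Spectral norm (largest singular value) of a real matrix: the operator 2-norm. -/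
noncomputable def specNorm {m n : ℕ} (A : Matrix (Fin m) (Fin n) ℝ) : ℝ :=
  ‖LinearMap.toContinuousLinearMap (Matrix.toEuclideanLin A)‖

lemma specNorm_nonneg {m n : ℕ} (A : Matrix (Fin m) (Fin n) ℝ) : 0 ≤ specNorm A :=
  norm_nonneg _

lemma specNorm_pos {m n : ℕ} {A : Matrix (Fin m) (Fin n) ℝ} (hA : A ≠ 0) :
    0 < specNorm A := by
  rw [specNorm, norm_pos_iff]
  intro h
  apply hA
  have h1 : Matrix.toEuclideanLin A = 0 :=
    LinearMap.toContinuousLinearMap.injective (by simpa using h)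
  have := (Matrix.toEuclideanLin (𝕜 := ℝ) (m := Fin m) (n := Fin n)).injective
    (by simpa using h1)
  simpa using this

lemma specNorm_sub_smul_le {m n : ℕ} (A B : Matrix (Fin m) (Fin n) ℝ) (η : ℝ) (hη : 0 ≤ η) :
    specNorm (A - η • B) ≤ specNorm A + η * specNorm B := by
  unfold specNorm
  have : Matrix.toEuclideanLin (A - η • B) =
      Matrix.toEuclideanLin A - η • Matrix.toEuclideanLin B := by
    simp only [map_sub, _root_.map_smul]
  rw [this, map_sub, _root_.map_smul]
  have h2 : ‖η • LinearMap.toContinuousLinearMap (Matrix.toEuclideanLin B)‖ ≤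
      η * ‖LinearMap.toContinuousLinearMap (Matrix.toEuclideanLin B)‖ := by
    have := ContinuousLinearMap.opNorm_smul_le η
      (LinearMap.toContinuousLinearMap (Matrix.toEuclideanLin B))
    simpa [abs_of_nonneg hη] using this
  calc ‖LinearMap.toContinuousLinearMap (Matrix.toEuclideanLin A) -
        η • LinearMap.toContinuousLinearMap (Matrix.toEuclideanLin B)‖
      ≤ ‖LinearMap.toContinuousLinearMap (Matrix.toEuclideanLin A)‖ +
        ‖η • LinearMap.toContinuousLinearMap (Matrix.toEuclideanLin B)‖ := norm_sub_le _ _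
    _ ≤ _ := by linarith

lemma trace_transpose_mul_self_nonneg {m n : ℕ} (A : Matrix (Fin m) (Fin n) ℝ) :
    0 ≤ (Aᵀ * A).trace := by
  simp only [Matrix.trace, Matrix.diag, Matrix.mul_apply, Matrix.transpose_apply]
  exact Finset.sum_nonneg fun i _ => Finset.sum_nonneg fun j _ => mul_self_nonneg _

lemma trace_expand {m N : ℕ} (A B : Matrix (Fin m) (Fin N) ℝ) (η : ℝ) :
    ((A - η • B)ᵀ * (A - η • B)).trace =
      (Aᵀ * A).trace - 2 * η * (Aᵀ * B).trace + η ^ 2 * (Bᵀ * B).trace := by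
  have hBA : (Bᵀ * A).trace = (Aᵀ * B).trace := by
    rw [← Matrix.trace_transpose (Bᵀ * A), Matrix.transpose_mul, Matrix.transpose_transpose]
  simp only [Matrix.transpose_sub, Matrix.transpose_smul, Matrix.sub_mul, Matrix.mul_sub,
    Matrix.smul_mul, Matrix.mul_smul, Matrix.trace_sub, Matrix.trace_smul, smul_eq_mul,
    smul_smul, hBA]
  ring

/-- Knowledge-gain difference bound: `G(C) − G(A) ≥ D/(Nγ)` where
`D = (1 − γ/‖A‖₂²) trace(AᵀA) − 2η trace(AᵀB) + η² trace(BᵀB)`. -/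
theorem knowledge_gain_difference_bound (m N : ℕ)
    (A B : Matrix (Fin m) (Fin N) ℝ) (hA : A ≠ 0) (hB : B ≠ 0)
    (η : ℝ) (hη : 0 ≤ η)
    (C : Matrix (Fin m) (Fin N) ℝ) (hC : C = A - η • B) (hC0 : C ≠ 0)
    (γ D : ℝ)
    (hγ : γ = specNorm A ^ 2 + η ^ 2 * specNorm B ^ 2 + 2 * η * specNorm A * specNorm B)
    (hD : D = (1 - γ / specNorm A ^ 2) * (Aᵀ * A).trace
        - 2 * η * (Aᵀ * B).trace + η ^ 2 * (Bᵀ * B).trace) :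
    (Cᵀ * C).trace / (N * specNorm C ^ 2) - (Aᵀ * A).trace / (N * specNorm A ^ 2) ≥
      D / (N * γ) := by
  have hN : 0 < (N : ℝ) := by
    rcases Nat.eq_zero_or_pos N with h | h
    · exfalso; apply hA; subst h; ext i j; exact absurd j.2 (Nat.not_lt_zero _)
    · exact_mod_cast h
  have ha : 0 < specNorm A := specNorm_pos hA
  have hb : 0 ≤ specNorm B := specNorm_nonneg B
  have hc : 0 < specNorm C := specNorm_pos hC0
  have hγeq : γ = (specNorm A + η * specNorm B) ^ 2 := by rw [hγ]; ring
  have hγpos : 0 < γ := by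
    rw [hγeq]; positivity
  have hcγ : specNorm C ^ 2 ≤ γ := by
    rw [hγeq]
    have h1 : specNorm C ≤ specNorm A + η * specNorm B := hC ▸ specNorm_sub_smul_le A B η hη
    exact pow_le_pow_left₀ hc.le h1 2
  have htC : (Cᵀ * C).trace =
      (Aᵀ * A).trace - 2 * η * (Aᵀ * B).trace + η ^ 2 * (Bᵀ * B).trace := by
    rw [hC]; exact trace_expand A B η
  have htCnn : 0 ≤ (Cᵀ * C).trace := trace_transpose_mul_self_nonneg C
  have key : (Cᵀ * C).trace / (N * γ) ≤ (Cᵀ * C).trace / (N * specNorm C ^ 2) := by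
    apply div_le_div_of_nonneg_left htCnn (by positivity)
    exact mul_le_mul_of_nonneg_left hcγ hN.le
  have hDeq : D / (N * γ) =
      (Cᵀ * C).trace / (N * γ) - (Aᵀ * A).trace / (N * specNorm A ^ 2) := by
    rw [hD, htC]
    field_simp
    ring
  rw [hDeq]
  linarith
end

section
/- Increasing-knowledge-gain step-size theorem (p = 2): let A, B be nonzero m×N real matrices with trace(BᵀB)·‖A‖₂² > ‖B‖₂²·trace(AᵀA). Then there exists η₀ ≥ 0 such that for all η ≥ η₀, the matrix C = A − ηB satisfies G(C) ≥ G(A), where G(M) = trace(MᵀM)/(N‖M‖₂²). -/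
open Matrix BigOperators

/-!
With `G(M) = (‖M‖_F / ‖M‖₂)² / N`, the hypothesis says `‖A‖_F / ‖A‖₂ < ‖B‖_F / ‖B‖₂`.
By the triangle inequality, `‖A - ηB‖_F ≥ η‖B‖_F - ‖A‖_F` and `‖A - ηB‖₂ ≤ ‖A‖₂ + η‖B‖₂`, so the
ratio for `A - ηB` is at least `(η‖B‖_F - ‖A‖_F) / (‖A‖₂ + η‖B‖₂)`, which tends to
`‖B‖_F / ‖B‖₂` and therefore eventually exceeds `‖A‖_F / ‖A‖₂`. Only the seminorm axioms of
the two norms enter.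
-/

open Filter

namespace Seminorm

variable {E : Type*} [AddCommGroup E] [Module ℝ E] (p q : Seminorm ℝ E) {a b : E} {η : ℝ}

theorem map_sub_smul_le (hη : 0 ≤ η) : p (a - η • b) ≤ p a + η * p b := by
  simpa [map_smul_eq_mul, abs_of_nonneg hη] using map_sub_le_add p a (η • b)

theorem le_map_sub_smul (hη : 0 ≤ η) : η * p b - p a ≤ p (a - η • b) := by
  simpa [map_smul_eq_mul, abs_of_nonneg hη, map_sub_rev p a] using
    le_of_abs_le (norm_sub_map_le_sub p (η • b) a)

theorem tendsto_map_sub_smul_atTop (hb : 0 < p b) :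
    Tendsto (fun η : ℝ => p (a - η • b)) atTop atTop := by
  refine tendsto_atTop_mono' _ ?_ <|
    tendsto_atTop_add_const_right _ (-p a) (tendsto_id.atTop_mul_const hb)
  filter_upwards [eventually_ge_atTop 0] with η hη
  simpa [sub_eq_add_neg] using le_map_sub_smul p hη

theorem eventually_mul_map_sub_smul_le (h : p a * q b < p b * q a) :
    ∀ᶠ η : ℝ in atTop, p a * q (a - η • b) ≤ p (a - η • b) * q a := by
  have hd : 0 < p b * q a - p a * q b := sub_pos.2 h
  filter_upwards [eventually_ge_atTop (2 * (p a * q a) / (p b * q a - p a * q b))] with η hη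
  have hη' : 2 * (p a * q a) ≤ η * (p b * q a - p a * q b) := (div_le_iff₀ hd).1 hη
  have hη₀ : 0 ≤ η := le_trans (by positivity) hη
  calc p a * q (a - η • b) ≤ p a * (q a + η * q b) :=
        mul_le_mul_of_nonneg_left (map_sub_smul_le q hη₀) (apply_nonneg p a)
    _ ≤ (η * p b - p a) * q a := by linarith
    _ ≤ p (a - η • b) * q a :=
        mul_le_mul_of_nonneg_right (le_map_sub_smul p hη₀) (apply_nonneg q a)

theorem eventually_div_le_div_map_sub_smul (hpq : ∀ x, q x = 0 → p x = 0)
    (h : p a * q b < p b * q a) :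
    ∀ᶠ η : ℝ in atTop, p a / q a ≤ p (a - η • b) / q (a - η • b) := by
  have hpos : 0 < p b * q a := (mul_nonneg (apply_nonneg p a) (apply_nonneg q b)).trans_lt h
  have hqa : 0 < q a := pos_of_mul_pos_right hpos (apply_nonneg p b)
  have hpb : 0 < p b := pos_of_mul_pos_left hpos (apply_nonneg q a)
  filter_upwards [eventually_mul_map_sub_smul_le p q h,
    (tendsto_map_sub_smul_atTop p hpb).eventually_gt_atTop 0] with η hle hp
  have hq : 0 < q (a - η • b) :=
    (apply_nonneg q _).lt_of_ne' fun h0 => hp.ne' (hpq _ h0)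
  exact (div_le_div_iff₀ hqa hq).2 hle

end Seminorm

namespace Matrix

section Frobenius

variable {m n : Type*} [Fintype m] [Fintype n]

def vecLinearMap : Matrix m n ℝ →ₗ[ℝ] EuclideanSpace ℝ (n × m) where
  toFun A := WithLp.toLp 2 A.vec
  map_add' _ _ := rfl
  map_smul' _ _ := rfl

noncomputable def frobeniusSeminorm : Seminorm ℝ (Matrix m n ℝ) :=
  (normSeminorm ℝ (EuclideanSpace ℝ (n × m))).comp vecLinearMap

theorem frobeniusSeminorm_sq (A : Matrix m n ℝ) :
    frobeniusSeminorm A ^ 2 = (Aᵀ * A).trace := by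
  rw [← vec_dotProduct_vec, frobeniusSeminorm, Seminorm.comp_apply, coe_normSeminorm,
    EuclideanSpace.real_norm_sq_eq]
  simp only [dotProduct, sq]
  rfl

end Frobenius

variable {m n : ℕ}

noncomputable def spectralSeminorm : Seminorm ℝ (Matrix (Fin m) (Fin n) ℝ) :=
  (normSeminorm ℝ (EuclideanSpace ℝ (Fin n) →L[ℝ] EuclideanSpace ℝ (Fin m))).comp
    ((toEuclideanLin.trans LinearMap.toContinuousLinearMap).toLinearMap)

theorem spectralSeminorm_apply (M : Matrix (Fin m) (Fin n) ℝ) :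
    spectralSeminorm M = specNorm M := rfl

theorem eq_zero_of_spectralSeminorm_eq_zero {M : Matrix (Fin m) (Fin n) ℝ}
    (h : spectralSeminorm M = 0) : M = 0 := by
  simpa [spectralSeminorm] using h

noncomputable def knowledgeGain (M : Matrix (Fin m) (Fin n) ℝ) : ℝ :=
  (Mᵀ * M).trace / (n * specNorm M ^ 2)

theorem knowledgeGain_eq (M : Matrix (Fin m) (Fin n) ℝ) :
    M.knowledgeGain = (M.frobeniusSeminorm / M.spectralSeminorm) ^ 2 / n := by
  rw [knowledgeGain, div_pow, frobeniusSeminorm_sq, spectralSeminorm_apply, div_div, mul_comm]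

end Matrix

theorem exists_step_size_increasing_knowledge_gain_general (m N : ℕ)
    (A B : Matrix (Fin m) (Fin N) ℝ)
    (h : (Bᵀ * B).trace * specNorm A ^ 2 > specNorm B ^ 2 * (Aᵀ * A).trace) :
    ∃ η₀ : ℝ, 0 ≤ η₀ ∧ ∀ η : ℝ, η₀ ≤ η →
      ((A - η • B)ᵀ * (A - η • B)).trace / (N * specNorm (A - η • B) ^ 2) ≥
        (Aᵀ * A).trace / (N * specNorm A ^ 2) := by
  have hratio : A.frobeniusSeminorm * B.spectralSeminorm <
      B.frobeniusSeminorm * A.spectralSeminorm := by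
    rw [← pow_lt_pow_iff_left₀ (by positivity) (by positivity) two_ne_zero, mul_pow, mul_pow,
      frobeniusSeminorm_sq, frobeniusSeminorm_sq, spectralSeminorm_apply, spectralSeminorm_apply]
    linarith
  have hvanish (C : Matrix (Fin m) (Fin N) ℝ) (hC : C.spectralSeminorm = 0) :
      C.frobeniusSeminorm = 0 := by
    rw [eq_zero_of_spectralSeminorm_eq_zero hC, map_zero]
  obtain ⟨η₀, hη₀⟩ :=
    eventually_atTop.1 (Seminorm.eventually_div_le_div_map_sub_smul _ _ hvanish hratio)
  refine ⟨max η₀ 0, le_max_right _ _, fun η hη => ?_⟩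
  change A.knowledgeGain ≤ (A - η • B).knowledgeGain
  rw [knowledgeGain_eq, knowledgeGain_eq]
  gcongr ?_ ^ 2 / _
  exact hη₀ η (le_of_max_le_left hη)

/-- Increasing-knowledge-gain step-size theorem (p = 2): if
`trace(BᵀB)‖A‖₂² > ‖B‖₂² trace(AᵀA)`, then there is `η₀ ≥ 0` such that for all
`η ≥ η₀`, `C = A − ηB` satisfies `G(C) ≥ G(A)` with `G(M) = trace(MᵀM)/(N‖M‖₂²)`. -/
theorem exists_step_size_increasing_knowledge_gain (m N : ℕ)
    (A B : Matrix (Fin m) (Fin N) ℝ) (hA : A ≠ 0) (hB : B ≠ 0)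
    (h : (Bᵀ * B).trace * specNorm A ^ 2 > specNorm B ^ 2 * (Aᵀ * A).trace) :
    ∃ η₀ : ℝ, 0 ≤ η₀ ∧ ∀ η : ℝ, η₀ ≤ η →
      ((A - η • B)ᵀ * (A - η • B)).trace / (N * specNorm (A - η • B) ^ 2) ≥
        (Aᵀ * A).trace / (N * specNorm A ^ 2) :=
  exists_step_size_increasing_knowledge_gain_general m N A B h
end
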